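/- arXiv:2505.14584 — 8 statements merged into one kernel-verified Lean document; each statement's English description precedes it below -/
import Mathlib

section
/- Let A be an evolution algebra over a field K with natural basis B = (e_i)_{i∈Λ} and structure constants ω. Then the map sending each f ∈ Diag(A;B) to the family (x_i)_{i∈Λ} of scalars determined by f(e_i) = x_i e_i is a group isomorphism from Diag(A;B) onto the subgroup of the product group (K^×)^Λ (componentwise multiplication) consisting of all families (x_i)_{i∈Λ} such that x_i² = x_j whenever ω_{ji} ≠ 0. -/
/-- The set of `K`-algebra automorphisms of `A` (realized as `K`-linear automorphisms
preserving the multiplication) that are diagonal with respect to the natural basis `e`: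
each basis vector is sent to a nonzero scalar multiple of itself. -/
def diagSet {K A Λ : Type*} [Field K] [NonUnitalNonAssocCommRing A] [Module K A]
    [SMulCommClass K A A] [IsScalarTower K A A] (e : Module.Basis Λ K A) :
    Set (A ≃ₗ[K] A) :=
  {f | (∀ x y : A, f (x * y) = f x * f y) ∧ ∀ i, ∃ x : Kˣ, f (e i) = (x : K) • e i}

section Aux

variable {K A Λ : Type*} [Field K] [NonUnitalNonAssocCommRing A] [Module K A]
    [SMulCommClass K A A] [IsScalarTower K A A]

/-- coefficient extraction -/
lemma coeff_eq (e : Module.Basis Λ K A) (c d : K) (i : Λ) (h : c • e i = d • e i) : c = d := by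
  have := congrArg (fun v => e.repr v i) h
  simpa using this

/-- repr of a diagonal linear map -/
lemma repr_diag (e : Module.Basis Λ K A) (T : A →ₗ[K] A) (y : Λ → K)
    (hy : ∀ j, T (e j) = y j • e j) (a : A) (j : Λ) :
    e.repr (T a) j = y j * e.repr a j := by
  have h : (e.coord j).comp T = y j • e.coord j := by
    apply e.ext
    intro i
    simp only [LinearMap.coe_comp, Function.comp_apply, hy i, map_smul, LinearMap.smul_apply,
      Module.Basis.coord_apply, Module.Basis.repr_self, smul_eq_mul, Finsupp.smul_apply, Finsupp.single_apply]
    by_cases hij : i = j <;> simp [hij]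
  have := LinearMap.congr_fun h a
  simpa using this

end Aux

/-- Let `A` be an evolution algebra over a field `K` with natural basis `B = (e_i)_{i∈Λ}`
and structure constants `ω` (so `ω j i = e.repr (e i * e i) j`).  Then the map sending
each `f ∈ Diag(A;B)` to the family `(x_i)` of scalars determined by `f (e i) = x_i • e i`
is a group isomorphism from `Diag(A;B)` onto the subgroup of `(Kˣ)^Λ` consisting of all
families with `x i ^ 2 = x j` whenever `ω j i ≠ 0`. -/
theorem stmt0 {K A Λ : Type*} [Field K] [NonUnitalNonAssocCommRing A] [Module K A]
    [SMulCommClass K A A] [IsScalarTower K A A]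
    (e : Module.Basis Λ K A) (hnat : ∀ i j, i ≠ j → e i * e j = 0)
    (ω : Λ → Λ → K) (hω : ∀ i j, ω j i = e.repr (e i * e i) j)
    (D : Subgroup (A ≃ₗ[K] A)) (hD : (D : Set (A ≃ₗ[K] A)) = diagSet e) :
    ∃ φ : D →* (Λ → Kˣ),
      Function.Injective φ ∧
      (∀ f : D, ∀ i, (f : A ≃ₗ[K] A) (e i) = ((φ f) i : K) • e i) ∧
      Set.range φ = {x : Λ → Kˣ | ∀ i j, ω j i ≠ 0 → (x i) ^ 2 = x j} := by
  classical
  have hmem : ∀ f : D, (f : A ≃ₗ[K] A) ∈ diagSet e := by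
    intro f
    have : (f : A ≃ₗ[K] A) ∈ (D : Set (A ≃ₗ[K] A)) := f.2
    rwa [hD] at this
  choose χ hχ using fun f : D => (hmem f).2
  have hmul : ∀ (f : D) (a b : A), (f : A ≃ₗ[K] A) (a * b) =
      (f : A ≃ₗ[K] A) a * (f : A ≃ₗ[K] A) b := fun f => (hmem f).1
  -- uniqueness of the scalars
  have huniq : ∀ (f : D) (i : Λ) (x : Kˣ),
      (f : A ≃ₗ[K] A) (e i) = (x : K) • e i → x = χ f i := by
    intro f i x hx
    exact Units.ext (coeff_eq e _ _ i (hx.symm.trans (hχ f i)))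
  refine ⟨{ toFun := χ, map_one' := ?_, map_mul' := ?_ }, ?_, ?_, ?_⟩
  · funext i
    exact ((huniq 1 i 1 (by simp)).symm)
  · intro f g
    funext i
    refine (huniq (f * g) i (χ f i * χ g i) ?_).symm
    have : ((f * g : D) : A ≃ₗ[K] A) (e i)
        = (f : A ≃ₗ[K] A) ((g : A ≃ₗ[K] A) (e i)) := rfl
    rw [this, hχ g i, map_smul, hχ f i, smul_smul, mul_comm]
    rfl
  · -- injectivity
    intro f g h
    have h' : ∀ i, χ f i = χ g i := fun i => congrFun h i
    apply Subtype.ext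
    apply LinearEquiv.toLinearMap_injective
    apply e.ext
    intro i
    simp only [LinearEquiv.coe_coe]
    rw [hχ f i, hχ g i, h' i]
  · exact hχ
  · ext x
    constructor
    · rintro ⟨f, rfl⟩
      intro i j hji
      simp only [MonoidHom.coe_mk, OneHom.coe_mk]
      -- f (e i * e i) computed two ways
      have h1 : e.repr ((f : A ≃ₗ[K] A) (e i * e i)) j = (χ f j : K) * ω j i := by
        have := repr_diag e ((f : A ≃ₗ[K] A) : A →ₗ[K] A) (fun k => (χ f k : K))
          (fun k => by simpa using hχ f k) (e i * e i) j
        simpa [← hω] using this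
      have h2 : (f : A ≃ₗ[K] A) (e i * e i) = ((χ f i : K) ^ 2) • (e i * e i) := by
        rw [hmul f, hχ f i, smul_mul_smul_comm, ← sq]
      have h3 : e.repr ((f : A ≃ₗ[K] A) (e i * e i)) j = (χ f i : K) ^ 2 * ω j i := by
        rw [h2, map_smul, Finsupp.smul_apply, ← hω, smul_eq_mul]
      have := h1.symm.trans h3
      have hval : (χ f i : K) ^ 2 = (χ f j : K) := (mul_right_cancel₀ hji this).symm
      exact Units.ext (by simpa using hval)
    · intro hx
      simp only [Set.mem_setOf_eq] at hx
      -- build the diagonal automorphism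
      set L : A →ₗ[K] A := e.constr K fun i => (x i : K) • e i with hL
      set L' : A →ₗ[K] A := e.constr K fun i => ((x i)⁻¹ : Kˣ) • e i with hL'
      have hLe : ∀ i, L (e i) = (x i : K) • e i := fun i => e.constr_basis K _ i
      have hL'e : ∀ i, L' (e i) = (((x i)⁻¹ : Kˣ) : K) • e i := fun i => e.constr_basis K _ i
      have hLL' : L ∘ₗ L' = LinearMap.id := by
        apply e.ext
        intro i
        simp [hLe, hL'e, smul_smul]
      have hL'L : L' ∘ₗ L = LinearMap.id := by
        apply e.ext
        intro i
        simp [hLe, hL'e, smul_smul]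
      set g : A ≃ₗ[K] A := LinearEquiv.ofLinear L L' hLL' hL'L with hg
      have hge : ∀ i, g (e i) = (x i : K) • e i := hLe
      -- multiplicativity
      have hkey : ∀ i, L (e i * e i) = ((x i : K) ^ 2) • (e i * e i) := by
        intro i
        apply e.repr.injective
        ext j
        rw [repr_diag e L (fun k => (x k : K)) hLe (e i * e i) j, map_smul,
          Finsupp.smul_apply, ← hω, smul_eq_mul]
        by_cases h : ω j i = 0
        · simp [h]
        · have := hx i j h
          have : (x i : K) ^ 2 = (x j : K) := by
            rw [← this]; simp
          rw [this]
      have hgmul : ∀ a b : A, g (a * b) = g a * g b := by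
        have hbil : (LinearMap.mul K A).compr₂ L = (LinearMap.mul K A).compl₁₂ L L := by
          apply e.ext
          intro i
          apply e.ext
          intro j
          simp only [LinearMap.compr₂_apply, LinearMap.compl₁₂_apply, LinearMap.mul_apply']
          by_cases hij : i = j
          · subst hij
            rw [hkey i, hLe, smul_mul_smul_comm, ← sq]
          · rw [hnat i j hij, map_zero, hLe, hLe, smul_mul_smul_comm, hnat i j hij, smul_zero]
        intro a b
        have := LinearMap.congr_fun (LinearMap.congr_fun hbil a) b
        exact (by simpa using this : L (a * b) = L a * L b)
      have hgD : g ∈ D := by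
        rw [← SetLike.mem_coe, hD]
        exact ⟨hgmul, fun i => ⟨x i, hge i⟩⟩
      refine ⟨⟨g, hgD⟩, ?_⟩
      funext i
      exact (huniq ⟨g, hgD⟩ i (x i) (hge i)).symm
end

section
/- Let A be an evolution algebra over a field K with natural basis B = (e_i)_{i∈Λ}, and suppose that the K-linear endomorphism of A determined by e_i ↦ e_i² for all i ∈ Λ is bijective (i.e., the structure matrix of A relative to B is invertible as a column-finite matrix). Then for every natural basis (u_j)_{j∈Λ'} of A there exist a bijection σ : Λ' → Λ and scalars k_j ∈ K^× such that u_j = k_j e_{σ(j)} for every j ∈ Λ'. -/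
section aux
variable {K A : Type*} [Field K] [NonUnitalNonAssocCommRing A] [Module K A]
  [SMulCommClass K A A] [IsScalarTower K A A]

omit [SMulCommClass K A A] [IsScalarTower K A A] in
lemma stmt1_sum_repr {Λ' : Type*} (v : Module.Basis Λ' K A) (x : A) (s : Finset Λ')
    (hs : (v.repr x).support ⊆ s) : ∑ i ∈ s, v.repr x i • v i = x := by
  have h := v.linearCombination_repr x
  rw [Finsupp.linearCombination_apply, Finsupp.sum] at h
  rw [← Finset.sum_subset hs (fun i _ hi => by
    rw [Finsupp.notMem_support_iff.mp hi, zero_smul])]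
  exact h

end aux

/-- Let `A` be an evolution algebra over a field `K` with natural basis `(e_i)_{i∈Λ}`,
and suppose that the `K`-linear endomorphism of `A` determined by `e i ↦ e i * e i`
is bijective (i.e. the structure matrix of `A` relative to the basis is invertible).
Then for every natural basis `(u_j)_{j∈Λ'}` of `A` there are a bijection `σ : Λ' → Λ`
and scalars `k j ∈ Kˣ` with `u j = k j • e (σ j)` for every `j`. -/
theorem stmt1 {K A Λ : Type*} [Field K] [NonUnitalNonAssocCommRing A] [Module K A]
    [SMulCommClass K A A] [IsScalarTower K A A]
    (e : Module.Basis Λ K A) (hnat : ∀ i j, i ≠ j → e i * e j = 0)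
    (hbij : Function.Bijective (e.constr K fun i => e i * e i))
    {Λ' : Type*} (u : Module.Basis Λ' K A) (hnat' : ∀ i j, i ≠ j → u i * u j = 0) :
    ∃ (σ : Λ' ≃ Λ) (k : Λ' → Kˣ), ∀ j, u j = (k j : K) • e (σ j) := by
  classical
  -- the squares form a linearly independent family
  have hL : LinearIndependent K (fun i => e i * e i) := by
    have h := e.linearIndependent.map' (e.constr K fun i => e i * e i)
      (LinearMap.ker_eq_bot.mpr hbij.injective)
    convert h using 1
    ext i
    simp [Module.Basis.constr_basis]
    all_goals rfl
  -- diagonal multiplication formula (for the basis e)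
  have diag : ∀ (x y : A) (s : Finset Λ), (e.repr x).support ⊆ s →
      (e.repr y).support ⊆ s →
      x * y = ∑ i ∈ s, (e.repr x i * e.repr y i) • (e i * e i) := by
    intro x y s hx hy
    conv_lhs => rw [← stmt1_sum_repr e x s hx, ← stmt1_sum_repr e y s hy]
    rw [Finset.sum_mul_sum]
    refine Finset.sum_congr rfl fun i hi => ?_
    rw [Finset.sum_eq_single i (fun j _ hji => by
        rw [smul_mul_assoc, mul_smul_comm, hnat i j (Ne.symm hji), smul_zero, smul_zero])
      (fun h => absurd hi h)]
    rw [smul_mul_assoc, mul_smul_comm, smul_smul]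
  -- disjoint supports of columns
  have horth : ∀ (i : Λ) (j l : Λ'), j ≠ l → e.repr (u j) i * e.repr (u l) i = 0 := by
    intro i j l hjl
    by_cases h1 : e.repr (u j) i = 0
    · rw [h1, zero_mul]
    by_cases h2 : e.repr (u l) i = 0
    · rw [h2, mul_zero]
    have h0 := diag (u j) (u l) ((e.repr (u j)).support ∪ (e.repr (u l)).support)
      Finset.subset_union_left Finset.subset_union_right
    rw [hnat' j l hjl] at h0
    exact linearIndependent_iff'.mp hL _ _ h0.symm i
      (Finset.mem_union_left _ (Finsupp.mem_support_iff.mpr h1))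
  -- squares of the u's are nonzero
  have husq : ∀ j : Λ', u j * u j ≠ 0 := by
    intro j h0
    obtain ⟨i0, hi0⟩ : ∃ i, e.repr (u j) i ≠ 0 := by
      by_contra h
      push_neg at h
      exact u.ne_zero j (by
        have : e.repr (u j) = 0 := Finsupp.ext h
        simpa [this] using (e.repr.map_eq_zero_iff.mp this))
    have hd := diag (u j) (u j) (e.repr (u j)).support le_rfl le_rfl
    rw [h0] at hd
    have := linearIndependent_iff'.mp hL _ _ hd.symm i0 (Finsupp.mem_support_iff.mpr hi0)
    exact hi0 (mul_self_eq_zero.mp this)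
  -- every row has a nonzero entry
  have hrow : ∀ i : Λ, ∃ j, e.repr (u j) i ≠ 0 := by
    intro i
    have h2 : e i = ∑ j ∈ (u.repr (e i)).support, u.repr (e i) j • u j :=
      (stmt1_sum_repr u (e i) _ le_rfl).symm
    have h1 : (1 : K) = ∑ j ∈ (u.repr (e i)).support, u.repr (e i) j * e.repr (u j) i := by
      calc (1 : K) = e.repr (e i) i := by simp
        _ = _ := by
          conv_lhs => rw [h2]
          rw [map_sum, Finset.sum_apply']
          refine Finset.sum_congr rfl fun j _ => ?_
          rw [map_smul, Finsupp.smul_apply, smul_eq_mul]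
    by_contra h
    push_neg at h
    have : (1 : K) = 0 := by
      rw [h1]
      exact Finset.sum_eq_zero fun j _ => by rw [h j, mul_zero]
    exact one_ne_zero this
  -- uniqueness of the nonzero entry in each row
  have huniq : ∀ (i : Λ) (j l : Λ'), e.repr (u j) i ≠ 0 → e.repr (u l) i ≠ 0 → j = l := by
    intro i j l hj hl
    by_contra hjl
    exact hj (mul_eq_zero.mp (horth i j l hjl) |>.resolve_right hl)
  choose τ hτ using hrow
  -- key: e i is a scalar multiple of u (τ i)
  have hkey : ∀ i, e i = u.repr (e i) (τ i) • u (τ i) := by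
    intro i
    have hd0 : ∀ j, j ≠ τ i → u.repr (e i) j = 0 := by
      intro j hj
      have hc : e.repr (u j) i = 0 := by
        by_contra h
        exact hj (huniq i j (τ i) h (hτ i))
      have hA : e i * u j = 0 := by
        conv_lhs => rw [← stmt1_sum_repr e (u j) _ le_rfl]
        rw [Finset.mul_sum]
        refine Finset.sum_eq_zero fun i' hi' => ?_
        rw [mul_smul_comm]
        rcases eq_or_ne i i' with rfl | hne
        · exact absurd hc (Finsupp.mem_support_iff.mp hi')
        · rw [hnat i i' hne, smul_zero]
      have hB : e i * u j = u.repr (e i) j • (u j * u j) := by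
        conv_lhs => rw [← stmt1_sum_repr u (e i) _ le_rfl]
        rw [Finset.sum_mul]
        by_cases hmem : j ∈ (u.repr (e i)).support
        · rw [Finset.sum_eq_single j (fun j' _ hj' => by
            rw [smul_mul_assoc, hnat' j' j hj', smul_zero]) (fun h => absurd hmem h),
            smul_mul_assoc]
        · rw [Finsupp.notMem_support_iff.mp hmem, zero_smul]
          exact Finset.sum_eq_zero fun j' hj' => by
            rw [smul_mul_assoc, hnat' j' j (fun h => hmem (h ▸ hj')), smul_zero]
      rw [hA] at hB
      exact (smul_eq_zero.mp hB.symm).resolve_right (husq j)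
    calc e i = ∑ j ∈ (u.repr (e i)).support, u.repr (e i) j • u j :=
          (stmt1_sum_repr u (e i) _ le_rfl).symm
      _ = u.repr (e i) (τ i) • u (τ i) :=
          Finset.sum_eq_single (τ i) (fun j _ hj => by rw [hd0 j hj, zero_smul])
            (fun h => by rw [Finsupp.notMem_support_iff.mp h, zero_smul])
  have hdnz : ∀ i, u.repr (e i) (τ i) ≠ 0 := by
    intro i h
    exact e.ne_zero i (by rw [hkey i, h, zero_smul])
  have hinj : Function.Injective τ := by
    intro i1 i2 h12
    by_contra hne
    have h1 := hkey i1
    rw [h12] at h1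
    have hu := congrArg (fun x => (u.repr (e i2) (τ i2))⁻¹ • x) (hkey i2)
    simp only [smul_smul, inv_mul_cancel₀ (hdnz i2), one_smul] at hu
    rw [← hu, smul_smul] at h1
    have h3 := congrArg (fun x => e.repr x i1) h1
    simp only [map_smul, Finsupp.smul_apply, Module.Basis.repr_self, smul_eq_mul,
      Finsupp.single_apply, if_pos rfl, if_neg (Ne.symm hne), mul_zero] at h3
    exact one_ne_zero h3
  have hsurj : Function.Surjective τ := by
    intro j
    obtain ⟨i0, hi0⟩ : ∃ i, e.repr (u j) i ≠ 0 := by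
      by_contra h
      push_neg at h
      exact u.ne_zero j (by
        have : e.repr (u j) = 0 := Finsupp.ext h
        simpa using (e.repr.map_eq_zero_iff.mp this))
    exact ⟨i0, (huniq i0 (τ i0) j (hτ i0) hi0)⟩
  let σ : Λ' ≃ Λ := (Equiv.ofBijective τ ⟨hinj, hsurj⟩).symm
  have hτσ : ∀ j, τ (σ j) = j := fun j => (Equiv.ofBijective τ ⟨hinj, hsurj⟩).apply_symm_apply j
  have hd : ∀ j, u.repr (e (σ j)) j ≠ 0 := fun j => by
    have := hdnz (σ j); rwa [hτσ j] at this
  refine ⟨σ, fun j => Units.mk0 _ (inv_ne_zero (hd j)), fun j => ?_⟩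
  have h := hkey (σ j)
  rw [hτσ j] at h
  have h4 := congrArg (fun x => (u.repr (e (σ j)) j)⁻¹ • x) h
  simp only [smul_smul, inv_mul_cancel₀ (hd j), one_smul] at h4
  exact h4.symm
end

section
/- Let A be an evolution algebra over a field K with natural basis B = (e_i)_{i∈Λ}, and suppose that the K-linear endomorphism of A determined by e_i ↦ e_i² for all i ∈ Λ is bijective (i.e., the structure matrix of A relative to B is invertible as a column-finite matrix). Then every K-algebra automorphism f of A has the form f(e_i) = k_i e_{σ(i)} for all i ∈ Λ, where σ is a bijection of Λ and each k_i ∈ K^×. -/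
section EvoAux

variable {K A Λ : Type*} [Field K] [NonUnitalNonAssocCommRing A] [Module K A]
    [SMulCommClass K A A] [IsScalarTower K A A]

lemma evo_mul_repr (e : Module.Basis Λ K A) (hnat : ∀ i j, i ≠ j → e i * e j = 0) (x y : A) :
    x * y = ∑ l ∈ (e.repr x).support,
      (e.repr x l * e.repr y l) • (e l * e l) := by
  conv_lhs => rw [← e.linearCombination_repr x, ← e.linearCombination_repr y]
  rw [Finsupp.linearCombination_apply, Finsupp.linearCombination_apply,
    Finsupp.sum, Finsupp.sum, Finset.sum_mul_sum]
  refine Finset.sum_congr rfl fun l _ => ?_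
  rw [Finset.sum_eq_single l (fun m _ hm => by
      rw [smul_mul_smul_comm, hnat l m (Ne.symm hm), smul_zero])
    (fun hl => by
      rw [Finsupp.notMem_support_iff.mp hl, zero_smul, mul_zero]),
    smul_mul_smul_comm]

omit [SMulCommClass K A A] [IsScalarTower K A A] in
lemma evo_lin_repr (e : Module.Basis Λ K A) (f : A ≃ₗ[K] A) (a : A) (l : Λ) :
    e.repr (f a) l = ∑ i ∈ (e.repr a).support, e.repr a i * e.repr (f (e i)) l := by
  conv_lhs => rw [← e.linearCombination_repr a]
  rw [Finsupp.linearCombination_apply, Finsupp.sum, map_sum, map_sum,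
    Finsupp.finset_sum_apply]
  refine Finset.sum_congr rfl fun i _ => ?_
  rw [map_smul, map_smul, Finsupp.smul_apply, smul_eq_mul]

lemma evo_orth (e : Module.Basis Λ K A) (hnat : ∀ i j, i ≠ j → e i * e j = 0)
    (hbij : Function.Bijective (e.constr K fun i => e i * e i))
    (f : A ≃ₗ[K] A) (hf : ∀ x y : A, f (x * y) = f x * f y)
    {i j : Λ} (hij : i ≠ j) (l : Λ) :
    e.repr (f (e i)) l * e.repr (f (e j)) l = 0 := by
  have h0 : f (e i) * f (e j) = 0 := by rw [← hf, hnat i j hij, map_zero]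
  rw [evo_mul_repr e hnat] at h0
  have h1 : (e.constr K fun l => e l * e l)
      (∑ m ∈ (e.repr (f (e i))).support,
        (e.repr (f (e i)) m * e.repr (f (e j)) m) • e m) = 0 := by
    rw [map_sum]
    simpa [Module.Basis.constr_basis] using h0
  have h2 : (∑ m ∈ (e.repr (f (e i))).support,
      (e.repr (f (e i)) m * e.repr (f (e j)) m) • e m) = 0 :=
    hbij.injective (by rw [h1, map_zero])
  by_cases hl : l ∈ (e.repr (f (e i))).support
  · exact linearIndependent_iff'.mp e.linearIndependent _ _ h2 l hl
  · rw [Finsupp.notMem_support_iff.mp hl, zero_mul]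

lemma evo_row (e : Module.Basis Λ K A) (hnat : ∀ i j, i ≠ j → e i * e j = 0)
    (hbij : Function.Bijective (e.constr K fun i => e i * e i))
    (f : A ≃ₗ[K] A) (hf : ∀ x y : A, f (x * y) = f x * f y) :
    ∃ σ : Λ → Λ, ∀ l j, e.repr (f (e j)) l ≠ 0 ↔ j = σ l := by
  have hex : ∀ l, ∃ j, e.repr (f (e j)) l ≠ 0 := by
    intro l
    by_contra h
    push_neg at h
    obtain ⟨a, ha⟩ := f.surjective (e l)
    have h1 : (1 : K) = e.repr (f a) l := by
      rw [ha, e.repr_self, Finsupp.single_eq_same]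
    rw [evo_lin_repr] at h1
    simp [h] at h1
  choose σ hσ using hex
  refine ⟨σ, fun l j => ⟨fun hj => ?_, fun hj => hj ▸ hσ l⟩⟩
  by_contra hne
  rcases mul_eq_zero.mp (evo_orth e hnat hbij f hf hne l) with h | h
  · exact hj h
  · exact hσ l h

end EvoAux

/-- Let `A` be an evolution algebra over a field `K` with natural basis `(e_i)_{i∈Λ}`,
and suppose that the `K`-linear endomorphism of `A` determined by `e i ↦ e i * e i`
is bijective (i.e. the structure matrix of `A` relative to the basis is invertible).
Then every `K`-algebra automorphism `f` of `A` has the form `f (e i) = k i • e (σ i)`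
for a bijection `σ` of `Λ` and scalars `k i ∈ Kˣ`. -/
theorem stmt2 {K A Λ : Type*} [Field K] [NonUnitalNonAssocCommRing A] [Module K A]
    [SMulCommClass K A A] [IsScalarTower K A A]
    (e : Module.Basis Λ K A) (hnat : ∀ i j, i ≠ j → e i * e j = 0)
    (hbij : Function.Bijective (e.constr K fun i => e i * e i))
    (f : A ≃ₗ[K] A) (hf : ∀ x y : A, f (x * y) = f x * f y) :
    ∃ (σ : Equiv.Perm Λ) (k : Λ → Kˣ), ∀ i, f (e i) = (k i : K) • e (σ i) := by
  classical
  obtain ⟨σ', hσ'⟩ := evo_row e hnat hbij f hf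
  have hf' : ∀ x y : A, f.symm (x * y) = f.symm x * f.symm y := fun x y =>
    f.injective (by rw [hf, f.apply_symm_apply, f.apply_symm_apply, f.apply_symm_apply])
  obtain ⟨τ', hτ'⟩ := evo_row e hnat hbij f.symm hf'
  -- key: composing f with f.symm relates σ' and τ'
  have comp : ∀ (g h : A ≃ₗ[K] A) (ρ π : Λ → Λ),
      (∀ l j, e.repr (g (e j)) l ≠ 0 ↔ j = ρ l) →
      (∀ l j, e.repr (h (e j)) l ≠ 0 ↔ j = π l) →
      (∀ x, g (h x) = x) → ∀ l, π (ρ l) = l := by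
    intro g h ρ π hρ hπ ginv l
    have h1 : (1 : K) = e.repr (g (h (e l))) l := by
      rw [ginv, e.repr_self, Finsupp.single_eq_same]
    rw [evo_lin_repr] at h1
    by_contra hne
    have hz : ∀ i ∈ (e.repr (h (e l))).support,
        e.repr (h (e l)) i * e.repr (g (e i)) l = 0 := by
      intro i hi
      rcases eq_or_ne i (ρ l) with rfl | hiρ
      · have : e.repr (h (e l)) (ρ l) = 0 := by
          by_contra hc
          exact hne ((hπ (ρ l) l).mp hc).symm
        rw [this, zero_mul]
      · have : e.repr (g (e i)) l = 0 := by
          by_contra hc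
          exact hiρ ((hρ l i).mp hc)
        rw [this, mul_zero]
    rw [Finset.sum_eq_zero hz] at h1
    exact one_ne_zero h1
  have hστ : ∀ l, τ' (σ' l) = l :=
    comp f f.symm σ' τ' hσ' hτ' (fun x => f.apply_symm_apply x)
  have hτσ : ∀ l, σ' (τ' l) = l :=
    comp f.symm f τ' σ' hτ' hσ' (fun x => f.symm_apply_apply x)
  have hknz : ∀ i, e.repr (f (e i)) (τ' i) ≠ 0 := fun i =>
    (hσ' (τ' i) i).mpr (hτσ i).symm
  refine ⟨Equiv.mk τ' σ' hτσ hστ, fun i => Units.mk0 _ (hknz i), fun i => ?_⟩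
  apply e.repr.injective
  ext l
  simp only [map_smul, Finsupp.smul_apply, Module.Basis.repr_self, Equiv.coe_fn_mk, smul_eq_mul,
    Units.val_mk0]
  rcases eq_or_ne l (τ' i) with rfl | hl
  · rw [Finsupp.single_eq_same, mul_one]
  · rw [Finsupp.single_eq_of_ne hl, mul_zero]
    by_contra hc
    exact hl (((hσ' l i).mp hc ▸ hστ l).symm)
end

section
/- Let A be an evolution algebra over a field K with natural basis (e_i)_{i∈Λ}. Let u = Σ_{i∈S} λ_i e_i with S ⊆ Λ finite and λ_i ≠ 0 for all i ∈ S. If u² ≠ 0 and u is a natural vector of A, then the K-linear span of {e_i² : i ∈ S} is one-dimensional. -/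
/-- An element of an algebra is a natural vector if it belongs to some natural basis,
i.e. a basis whose distinct elements multiply to zero. -/
def IsNaturalVector (K : Type*) {A : Type*} [Field K] [NonUnitalNonAssocCommRing A]
    [Module K A] (u : A) : Prop :=
  ∃ (ι : Type*) (b : Module.Basis ι K A), (∀ i j, i ≠ j → b i * b j = 0) ∧ ∃ i, b i = u

/-- Let `A` be an evolution algebra over a field `K` with natural basis `(e_i)_{i∈Λ}`.
Let `u = ∑_{i∈S} c i • e i` with `S` finite and `c i ≠ 0` on `S`.  If `u * u ≠ 0` and
`u` is a natural vector of `A`, then the span of `{e i * e i : i ∈ S}` is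
one-dimensional. -/
theorem stmt4 {K A Λ : Type*} [Field K] [NonUnitalNonAssocCommRing A] [Module K A]
    [SMulCommClass K A A] [IsScalarTower K A A]
    (e : Module.Basis Λ K A) (hnat : ∀ i j, i ≠ j → e i * e j = 0)
    (S : Finset Λ) (c : Λ → K) (hc : ∀ i ∈ S, c i ≠ 0)
    (u : A) (hu : u = ∑ i ∈ S, c i • e i)
    (hu2 : u * u ≠ 0)
    (hnatvec : IsNaturalVector K u) :
    Module.finrank K
      ↥(Submodule.span K ((fun i => e i * e i) '' (S : Set Λ))) = 1 := by
  classical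
  obtain ⟨ι, b, hb, k, hk⟩ := hnatvec
  -- Step A: u * x ∈ span{u*u} for all x
  have hA : ∀ x : A, u * x ∈ Submodule.span K {u * u} := by
    intro x
    have hx : x ∈ Submodule.span K (Set.range b) := by
      rw [b.span_eq]; trivial
    refine Submodule.span_induction
      (p := fun x _ => u * x ∈ Submodule.span K {u * u}) ?_ ?_ ?_ ?_ hx
    · rintro y ⟨j, rfl⟩
      by_cases hjk : j = k
      · subst hjk; rw [hk]; exact Submodule.mem_span_singleton_self _
      · have h0 : u * b j = 0 := by rw [← hk, mul_comm]; exact hb j k hjk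
        rw [h0]; exact Submodule.zero_mem _
    · show u * (0:A) ∈ _
      rw [mul_zero]; exact Submodule.zero_mem _
    · intro a b' _ _ ha hb'
      rw [mul_add]; exact Submodule.add_mem _ ha hb'
    · intro r a _ ha
      rw [mul_smul_comm]; exact Submodule.smul_mem _ _ ha
  -- u * e i = c i • (e i * e i)
  have hue : ∀ i ∈ S, u * e i = c i • (e i * e i) := by
    intro i hi
    rw [hu, Finset.sum_mul, Finset.sum_eq_single i]
    · rw [smul_mul_assoc]
    · intro j _ hji
      rw [smul_mul_assoc, hnat j i hji, smul_zero]
    · intro h; exact absurd hi h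
  have hB : ∀ i ∈ S, e i * e i ∈ Submodule.span K {u * u} := by
    intro i hi
    have h : e i * e i = (c i)⁻¹ • (u * e i) := by
      rw [hue i hi, smul_smul, inv_mul_cancel₀ (hc i hi), one_smul]
    rw [h]
    exact Submodule.smul_mem _ _ (hA _)
  have hC : u * u ∈ Submodule.span K ((fun i => e i * e i) '' (S : Set Λ)) := by
    have h : u * u = ∑ i ∈ S, c i • (c i • (e i * e i)) := by
      nth_rewrite 1 [hu]
      rw [Finset.sum_mul]
      refine Finset.sum_congr rfl fun i hi => ?_
      rw [smul_mul_assoc, mul_comm (e i) u, hue i hi]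
    rw [h]
    refine Submodule.sum_mem _ fun i hi => ?_
    exact Submodule.smul_mem _ _ (Submodule.smul_mem _ _
      (Submodule.subset_span ⟨i, hi, rfl⟩))
  have hEq : Submodule.span K ((fun i => e i * e i) '' (S : Set Λ)) =
      Submodule.span K {u * u} := by
    apply le_antisymm
    · rw [Submodule.span_le]
      rintro _ ⟨i, hi, rfl⟩
      exact hB i hi
    · rw [Submodule.span_le, Set.singleton_subset_iff]
      exact hC
  rw [hEq, finrank_span_singleton hu2]
end

section
/- Let A be an evolution algebra over a field K (of arbitrary dimension and over an arbitrary field) admitting a natural basis B = (e_i)_{i∈Λ} satisfying the 2LI condition. Then every natural basis of A coincides with B up to permutation and scalar multiplication; that is, every element u of any other natural basis B' of A satisfies u = k e_i for some k ∈ K^× and some i ∈ Λ. -/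
/-- In an evolution algebra with natural basis `b`, multiplication by `b i` picks out
the `i`-th coordinate. -/
lemma evol_mul_key {K A Λ : Type*} [Field K] [NonUnitalNonAssocCommRing A] [Module K A]
    [SMulCommClass K A A] [IsScalarTower K A A]
    (b : Module.Basis Λ K A) (hnat : ∀ i j, i ≠ j → b i * b j = 0) (a : A) (i : Λ) :
    b i * a = (b.repr a i) • (b i * b i) := by
  conv_lhs => rw [← b.linearCombination_repr a, Finsupp.linearCombination_apply,
    Finsupp.mul_sum]
  rw [Finsupp.sum, Finset.sum_eq_single i]
  · rw [mul_smul_comm]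
  · intro m _ hm
    rw [mul_smul_comm, hnat i m hm.symm, smul_zero]
  · intro h
    rw [Finsupp.notMem_support_iff.mp h, zero_smul, mul_zero]

/-- Let `A` be an evolution algebra (of arbitrary dimension, over an arbitrary field `K`)
having a natural basis `(e_i)_{i∈Λ}` satisfying the 2LI condition (for `i ≠ j` the set
`{e i * e i, e j * e j}` is linearly independent).  Then every natural basis of `A`
coincides with `(e_i)` up to permutation and scalar multiplication: every element `u j`
of any other natural basis satisfies `u j = k • e i` for some `k ∈ Kˣ` and `i ∈ Λ`. -/
theorem stmt6 {K A Λ : Type*} [Field K] [NonUnitalNonAssocCommRing A] [Module K A]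
    [SMulCommClass K A A] [IsScalarTower K A A]
    (e : Module.Basis Λ K A) (hnat : ∀ i j, i ≠ j → e i * e j = 0)
    (h2li : ∀ i j, i ≠ j → LinearIndependent K ![e i * e i, e j * e j])
    {Λ' : Type*} (u : Module.Basis Λ' K A) (hnat' : ∀ i j, i ≠ j → u i * u j = 0) :
    ∀ j, ∃ (k : Kˣ) (i : Λ), u j = (k : K) • e i := by
  intro j
  set c : Λ →₀ K := e.repr (u j) with hc
  -- combine the two key identities
  have hcomb : ∀ i : Λ, c i • (e i * e i) = (u.repr (e i) j) • (u j * u j) := by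
    intro i
    have h1 := evol_mul_key e hnat (u j) i
    have h2 := evol_mul_key u hnat' (e i) j
    rw [← hc] at h1
    rw [← h1, mul_comm (e i) (u j)]
    exact h2
  -- the support of c is a subsingleton
  have hsub : ∀ i₁ ∈ c.support, ∀ i₂ ∈ c.support, i₁ = i₂ := by
    intro i₁ h₁ i₂ h₂
    by_contra hne
    have hli := (h2li i₁ i₂ hne)
    rw [LinearIndependent.pair_iff] at hli
    have hc₁ : c i₁ ≠ 0 := Finsupp.mem_support_iff.mp h₁
    have hc₂ : c i₂ ≠ 0 := Finsupp.mem_support_iff.mp h₂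
    have e1 := hcomb i₁
    have e2 := hcomb i₂
    have hrel : ((u.repr (e i₂)) j * c i₁) • (e i₁ * e i₁)
        + (-((u.repr (e i₁)) j * c i₂)) • (e i₂ * e i₂) = 0 := by
      rw [mul_smul, neg_smul, mul_smul, e1, e2, smul_smul, smul_smul,
        mul_comm ((u.repr (e i₂)) j) ((u.repr (e i₁)) j)]
      exact add_neg_cancel _
    obtain ⟨hr1, _⟩ := hli _ _ hrel
    have hβ : (u.repr (e i₂)) j = 0 := by
      rcases mul_eq_zero.mp hr1 with h | h
      · exact h
      · exact absurd h hc₁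
    have hY : e i₂ * e i₂ = 0 := by
      have : c i₂ • (e i₂ * e i₂) = 0 := by rw [e2, hβ, zero_smul]
      exact (smul_eq_zero.mp this).resolve_left hc₂
    have := hli 0 1 (by rw [hY, one_smul, zero_smul, zero_add])
    exact one_ne_zero this.2
  -- c is nonzero, so its support is a nonempty subsingleton: a singleton
  have hne : c ≠ 0 := by
    intro h
    apply u.ne_zero j
    have : e.repr (u j) = e.repr 0 := by rw [← hc, h, map_zero]
    exact e.repr.injective this
  obtain ⟨i, hi⟩ := Finsupp.support_nonempty_iff.mpr hne
  have hss : c.support ⊆ {i} := fun m hm => Finset.mem_singleton.mpr (hsub m hm i hi)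
  have hsingle : c = Finsupp.single i (c i) := Finsupp.support_subset_singleton.mp hss
  have huj : u j = e.repr.symm (Finsupp.single i (c i)) := by
    rw [← hsingle, hc, LinearEquiv.symm_apply_apply]
  refine ⟨Units.mk0 (c i) (Finsupp.mem_support_iff.mp hi), i, ?_⟩
  rw [huj, Module.Basis.repr_symm_single, Units.val_mk0]
end

section
/- Let A and A' be evolution algebras over a field K with natural bases (u_i)_{i∈Λ} and (v_j)_{j∈Λ'} and structure constants ω and ω' respectively. Let σ : Λ → Λ' be a bijection and (x_i)_{i∈Λ} a family of scalars in K^× such that ω'_{σ(j)σ(i)} x_i² = ω_{ji} x_j for all i, j ∈ Λ. Then the K-linear map t : A → A' determined by t(u_i) = x_i v_{σ(i)} is a K-algebra isomorphism, and it is the unique algebra homomorphism A → A' with t(u_i) = x_i v_{σ(i)} for all i. -/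
/-- Let `A` and `A'` be evolution algebras over `K` with natural bases `(u_i)_{i∈Λ}` and
`(v_j)_{j∈Λ'}` and structure constants `ω j i = u.repr (u i * u i) j` and
`ω' j i = v.repr (v i * v i) j`.  Let `σ : Λ → Λ'` be a bijection and `(x i)` scalars in
`Kˣ` with `ω' (σ j) (σ i) * (x i)² = ω j i * x j` for all `i j`.  Then the `K`-linear map
`t` determined by `t (u i) = x i • v (σ i)` is a `K`-algebra isomorphism, and it is the
unique (linear) algebra homomorphism `A → A'` with `t (u i) = x i • v (σ i)` for all `i`. -/
theorem stmt10 {K A A' Λ Λ' : Type*} [Field K]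
    [NonUnitalNonAssocCommRing A] [Module K A] [SMulCommClass K A A] [IsScalarTower K A A]
    [NonUnitalNonAssocCommRing A'] [Module K A'] [SMulCommClass K A' A']
    [IsScalarTower K A' A']
    (u : Module.Basis Λ K A) (hu : ∀ i j, i ≠ j → u i * u j = 0)
    (v : Module.Basis Λ' K A') (hv : ∀ i j, i ≠ j → v i * v j = 0)
    (σ : Λ ≃ Λ') (x : Λ → Kˣ)
    (hcomp : ∀ i j, v.repr (v (σ i) * v (σ i)) (σ j) * (x i : K) ^ 2
        = u.repr (u i * u i) j * (x j : K)) :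
    Function.Bijective (u.constr K fun i => (x i : K) • v (σ i)) ∧
    (∀ a b : A, (u.constr K fun i => (x i : K) • v (σ i)) (a * b)
        = (u.constr K fun i => (x i : K) • v (σ i)) a
          * (u.constr K fun i => (x i : K) • v (σ i)) b) ∧
    ∀ t' : A →ₗ[K] A', (∀ a b : A, t' (a * b) = t' a * t' b) →
      (∀ i, t' (u i) = (x i : K) • v (σ i)) →
      t' = u.constr K fun i => (x i : K) • v (σ i) := by
  set t := u.constr K fun i => (x i : K) • v (σ i) with ht
  have htu : ∀ i, t (u i) = (x i : K) • v (σ i) := fun i => u.constr_basis K _ i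
  -- bijectivity via the basis `w i = x i • v (σ i)`
  let w : Module.Basis Λ K A' := (v.reindex σ.symm).unitsSMul x
  have hw : ∀ i, w i = (x i : K) • v (σ i) := by
    intro i
    simp [w, Module.Basis.unitsSMul_apply, Units.smul_def]
  have hteq : t = (u.equiv w (Equiv.refl Λ)).toLinearMap := by
    apply u.ext
    intro i
    simp [htu i, hw i]
  have hbij : Function.Bijective t := by
    rw [hteq]; exact (u.equiv w (Equiv.refl Λ)).bijective
  -- multiplicativity on basis elements
  have hmul_basis : ∀ i j, t (u i * u j) = t (u i) * t (u j) := by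
    intro i j
    rcases eq_or_ne i j with rfl | hij
    · apply v.repr.injective
      ext j'
      obtain ⟨j, rfl⟩ := σ.surjective j'
      have hR : v.repr (t (u i) * t (u i)) (σ j)
          = v.repr (v (σ i) * v (σ i)) (σ j) * (x i : K) ^ 2 := by
        rw [htu, smul_mul_smul_comm, map_smul, Finsupp.smul_apply, smul_eq_mul, pow_two]
        ring
      have hL : v.repr (t (u i * u i)) (σ j) = u.repr (u i * u i) j * (x j : K) := by
        conv_lhs => rw [← u.linearCombination_repr (u i * u i)]
        rw [Finsupp.apply_linearCombination, Finsupp.linearCombination_apply,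
          map_finsuppSum, Finsupp.sum_apply]
        rw [Finsupp.sum_eq_single j]
        · simp [htu, mul_comm]
        · intro k _ hk
          simp only [Function.comp_apply, htu, map_smul, Finsupp.smul_apply,
            Module.Basis.repr_self]
          rw [Finsupp.single_apply_eq_zero.2 (fun h => absurd (σ.injective h.symm) hk)]
          simp
        · intro _
          simp
      rw [hL, hR, hcomp]
    · rw [hu i j hij, map_zero, htu, htu, smul_mul_smul_comm,
        hv _ _ (fun h => hij (σ.injective h)), smul_zero]
  -- multiplicativity in general, by bilinearity
  have hmul : ∀ a b : A, t (a * b) = t a * t b := by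
    have h : (LinearMap.mul K A).compr₂ t = (LinearMap.mul K A').compl₁₂ t t := by
      apply u.ext; intro i
      apply u.ext; intro j
      simpa using hmul_basis i j
    intro a b
    simpa using LinearMap.congr_fun (LinearMap.congr_fun h a) b
  refine ⟨hbij, hmul, ?_⟩
  intro t' _ ht'
  apply u.ext
  intro i
  rw [ht' i, htu i]
end

section
/- Let K be a field and let A be the evolution algebra over K with natural basis (u_i)_{i∈ℕ, i≥1} and multiplication determined by u_1² = u_1, u_{i+1}² = u_i for all i ≥ 1, and u_i u_j = 0 for i ≠ j. Then every K-algebra automorphism θ of A is diagonalizable with respect to this basis: for every i ≥ 1 there exists a scalar x_i ∈ K^× such that θ(u_i) = x_i u_i; moreover x_1 = 1 and x_{i+1}² = x_i for all i ≥ 1. -/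
section
variable {K A : Type*} [Field K] [NonUnitalNonAssocCommRing A] [Module K A]
    [SMulCommClass K A A] [IsScalarTower K A A]
    (u : Module.Basis ℕ K A)

lemma aux_mulA (hnat : ∀ i j, i ≠ j → u i * u j = 0)
    (hsq : ∀ i : ℕ, u i * u i = u (i - 1)) (i : ℕ) (b : A) :
    u i * b = (u.repr b i) • u (i - 1) := by
  have h : (LinearMap.mulLeft K (u i)) =
      (LinearMap.toSpanSingleton K A (u (i-1))).comp (u.coord i : A →ₗ[K] K) := by
    apply u.ext
    intro j
    simp only [LinearMap.mulLeft_apply, LinearMap.comp_apply, Module.Basis.coord_apply,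
      LinearMap.toSpanSingleton_apply, Module.Basis.repr_self]
    rcases eq_or_ne i j with rfl | hij
    · simp [hsq i]
    · simp [hnat i j hij, Finsupp.single_apply, Ne.symm hij]
  simpa using DFunLike.congr_fun h b

end

section
variable {K A : Type*} [Field K] [NonUnitalNonAssocCommRing A] [Module K A]
    [SMulCommClass K A A] [IsScalarTower K A A]
    (u : Module.Basis ℕ K A)

set_option linter.unusedSectionVars false in
lemma aux_mulB (hnat : ∀ i j, i ≠ j → u i * u j = 0)
    (hsq : ∀ i : ℕ, u i * u i = u (i - 1)) (a b : A) (k : ℕ) :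
    u.repr (a * b) k = (if k = 0 then (u.repr a 0) * (u.repr b 0) else 0)
      + (u.repr a (k+1)) * (u.repr b (k+1)) := by
  have h : ((Finsupp.lapply k : (ℕ →₀ K) →ₗ[K] K).comp
        ((u.repr : A ≃ₗ[K] (ℕ →₀ K)).toLinearMap.comp (LinearMap.mulRight K b)))
      = (if k = 0 then (u.repr b 0) else 0) • (u.coord 0 : A →ₗ[K] K)
        + (u.repr b (k+1)) • (u.coord (k+1) : A →ₗ[K] K) := by
    apply u.ext
    intro i
    simp only [LinearMap.comp_apply, LinearMap.mulRight_apply, LinearEquiv.coe_coe,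
      Finsupp.lapply_apply, LinearMap.add_apply, LinearMap.smul_apply, Module.Basis.coord_apply,
      Module.Basis.repr_self, smul_eq_mul]
    rw [aux_mulA u hnat hsq i b, map_smul]
    simp only [Module.Basis.repr_self, Finsupp.smul_single, smul_eq_mul, mul_one,
      Finsupp.single_apply]
    rcases i with _ | j
    · rcases eq_or_ne k 0 with rfl | hk
      · simp
      · simp [hk, Ne.symm hk]
    · simp only [Nat.succ_sub_one]
      rcases eq_or_ne j k with rfl | hjk
      · simp
      · simp [hjk, fun h : j + 1 = k + 1 => hjk (Nat.succ_injective h)]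
  have := DFunLike.congr_fun h a
  simpa [Module.Basis.coord_apply, apply_ite (fun f : A →ₗ[K] K => f a), mul_comm] using this

end

/-- Let `A` be the evolution algebra over a field `K` with natural basis
`(u_n)_{n∈ℕ}` (so `u n` plays the role of `u_{n+1}` of the paper, indexed from `1`) and
multiplication determined by `u 0 * u 0 = u 0`, `u (n+1) * u (n+1) = u n`, and
`u i * u j = 0` for `i ≠ j`.  Then every `K`-algebra automorphism `θ` of `A` is
diagonalizable with respect to this basis: there are scalars `x n ∈ Kˣ` with
`θ (u n) = x n • u n` for all `n`; moreover `x 0 = 1` and `(x (n+1))² = x n`. -/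
theorem stmt17 {K A : Type*} [Field K] [NonUnitalNonAssocCommRing A] [Module K A]
    [SMulCommClass K A A] [IsScalarTower K A A]
    (u : Module.Basis ℕ K A) (hnat : ∀ i j, i ≠ j → u i * u j = 0)
    (h1 : u 0 * u 0 = u 0) (hs : ∀ n : ℕ, u (n + 1) * u (n + 1) = u n)
    (θ : A ≃ₗ[K] A) (hθ : ∀ x y : A, θ (x * y) = θ x * θ y) :
    ∃ x : ℕ → Kˣ, (∀ n, θ (u n) = (x n : K) • u n) ∧
      x 0 = 1 ∧ ∀ n, (x (n + 1)) ^ 2 = x n := by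
  have hsq : ∀ i : ℕ, u i * u i = u (i - 1) := by
    intro i
    cases i with
    | zero => simpa using h1
    | succ n => simpa using hs n
  have hbound : ∀ a : A, ∃ M : ℕ, ∀ k, M ≤ k → u.repr a k = 0 := by
    intro a
    refine ⟨(u.repr a).support.sup id + 1, fun k hk => ?_⟩
    by_contra h
    have hmem : k ∈ (u.repr a).support := Finsupp.mem_support_iff.2 h
    have := Finset.le_sup (f := id) hmem
    simp only [id] at this
    omega
  -- base case: θ (u 0) = u 0
  have base : θ (u 0) = u 0 := by
    set a := θ (u 0) with ha
    have haa : a * a = a := by rw [ha, ← hθ, h1]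
    have hco : ∀ k, u.repr a k =
        (if k = 0 then (u.repr a 0) * (u.repr a 0) else 0)
          + (u.repr a (k+1)) * (u.repr a (k+1)) := by
      intro k
      conv_lhs => rw [← haa]
      exact aux_mulB u hnat hsq a a k
    have hz : ∀ d k, 1 ≤ k → u.repr a (k + d) = 0 → u.repr a k = 0 := by
      intro d
      induction d with
      | zero => intro k _ h; simpa using h
      | succ d ih =>
        intro k hk h
        have h1' : u.repr a (k+1) = 0 :=
          ih (k+1) (by omega) (by rw [show k+1+d = k+(d+1) by omega]; exact h)
        rw [hco k, if_neg (by omega), h1']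
        ring
    obtain ⟨M, hM⟩ := hbound a
    have hzero : ∀ k, 1 ≤ k → u.repr a k = 0 := fun k hk => hz M k hk (hM _ (by omega))
    have hrep : u.repr a = Finsupp.single 0 (u.repr a 0) := by
      ext k
      rcases Nat.eq_zero_or_pos k with rfl | hk
      · simp
      · rw [hzero k hk, Finsupp.single_apply, if_neg (by omega)]
    have hav : a = (u.repr a 0) • u 0 := by
      apply u.repr.injective
      rw [map_smul, Module.Basis.repr_self, Finsupp.smul_single, smul_eq_mul, mul_one]
      exact hrep
    have hne : u.repr a 0 ≠ 0 := by
      intro h0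
      rw [h0, zero_smul] at hav
      rw [ha] at hav
      exact u.ne_zero 0 ((LinearEquiv.map_eq_zero_iff θ).mp hav)
    have h00 : u.repr a 0 = 1 := by
      have h := hco 0
      rw [hzero 1 le_rfl, if_pos rfl, mul_zero, add_zero] at h
      have := mul_left_cancel₀ hne (show u.repr a 0 * u.repr a 0 = u.repr a 0 * 1 by
        rw [mul_one]; exact h.symm)
      exact this
    rw [hav, h00, one_smul]
  -- the scalars
  set y : ℕ → K := fun n => u.repr (θ (u n)) n with hy
  have hy0 : y 0 = 1 := by rw [hy]; simp [base]
  have claim : ∀ n, θ (u n) = y n • u n ∧ y n ≠ 0 := by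
    intro n
    induction n with
    | zero => rw [hy0, one_smul]; exact ⟨base, one_ne_zero⟩
    | succ n ih =>
      obtain ⟨ihv, ihne⟩ := ih
      set b := θ (u (n+1)) with hb
      have hbb : b * b = y n • u n := by rw [hb, ← hθ, hs n, ihv]
      have hco : ∀ k, (if k = 0 then (u.repr b 0) * (u.repr b 0) else 0)
          + (u.repr b (k+1)) * (u.repr b (k+1))
          = if n = k then y n else 0 := by
        intro k
        rw [← aux_mulB u hnat hsq b b k, hbb, map_smul, Module.Basis.repr_self,
          Finsupp.smul_single, smul_eq_mul, mul_one, Finsupp.single_apply]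
      -- b's 0-th coordinate vanishes
      have hb0 : u.repr b 0 = 0 := by
        have h0 : u 0 * b = 0 := by
          rw [show u 0 = θ (u 0) from base.symm, hb, ← hθ, hnat 0 (n+1) (by omega), map_zero]
        have h1' : u 0 * b = (u.repr b 0) • u 0 := by
          simpa using aux_mulA u hnat hsq 0 b
        rw [h0] at h1'
        rcases smul_eq_zero.mp h1'.symm with h | h
        · exact h
        · exact absurd h (u.ne_zero 0)
      have hother : ∀ k, k ≠ n + 1 → u.repr b k = 0 := by
        intro k hk
        rcases Nat.eq_zero_or_pos k with rfl | hkpos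
        · exact hb0
        · obtain ⟨j, rfl⟩ : ∃ j, k = j + 1 := ⟨k - 1, by omega⟩
          have h := hco j
          rw [if_neg (show ¬ n = j by omega)] at h
          simp only [hb0, mul_zero, zero_mul, zero_add, ite_self] at h
          simpa [mul_self_eq_zero] using h
      have hsqy : u.repr b (n+1) * u.repr b (n+1) = y n := by
        have h := hco n
        simp only [hb0, mul_zero, zero_mul, ite_self, zero_add, if_pos rfl] at h
        exact h
      have hbv : b = (u.repr b (n+1)) • u (n+1) := by
        apply u.repr.injective
        rw [map_smul, Module.Basis.repr_self, Finsupp.smul_single, smul_eq_mul, mul_one]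
        ext k
        rcases eq_or_ne k (n+1) with rfl | hk
        · simp
        · rw [hother k hk, Finsupp.single_apply, if_neg (Ne.symm hk)]
      have hyn1 : y (n+1) = u.repr b (n+1) := rfl
      have hyne : y (n+1) ≠ 0 := by
        intro h0
        rw [hyn1] at h0
        rw [h0, mul_zero] at hsqy
        exact ihne hsqy.symm
      rw [hyn1]
      exact ⟨hbv, hyne⟩
  have hsq2 : ∀ n, y (n+1) * y (n+1) = y n := by
    intro n
    have h1' : θ (u (n+1)) * θ (u (n+1)) = y n • u n := by
      rw [← hθ, hs n, (claim n).1]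
    rw [(claim (n+1)).1] at h1'
    rw [smul_mul_smul_comm, hs n] at h1'
    have := congrArg (fun v => u.repr v n) h1'
    simpa using this
  refine ⟨fun n => Units.mk0 (y n) (claim n).2, fun n => (claim n).1, ?_, ?_⟩
  · ext; exact hy0
  · intro n
    ext
    push_cast
    rw [sq]
    exact hsq2 n
end

section
/- Let K be a field and let A be the evolution algebra over K with natural basis (u_i)_{i∈ℤ} and multiplication u_i² = u_i + u_{i+1} and u_i u_j = 0 for i ≠ j. Then A is not perfect: A² ≠ A. Specifically, u_0 does not belong to the K-linear span of the set {u_i + u_{i+1} : i ∈ ℤ} (which equals A²). -/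
/-- Let `A` be the evolution algebra over a field `K` with natural basis `(u_i)_{i∈ℤ}`
and multiplication `u i * u i = u i + u (i+1)` and `u i * u j = 0` for `i ≠ j`.  Then
`A` is not perfect: `u 0` does not belong to the linear span of
`{u i + u (i+1) : i ∈ ℤ}` (which equals `A²`), and in particular `A² ≠ A`. -/
theorem stmt19 {K A : Type*} [Field K] [NonUnitalNonAssocCommRing A] [Module K A]
    [SMulCommClass K A A] [IsScalarTower K A A]
    (u : Module.Basis ℤ K A) (hnat : ∀ i j, i ≠ j → u i * u j = 0)
    (hmul : ∀ i : ℤ, u i * u i = u i + u (i + 1)) :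
    u 0 ∉ Submodule.span K {v : A | ∃ i : ℤ, v = u i + u (i + 1)} ∧
    Submodule.span K {v : A | ∃ a b : A, v = a * b} ≠ ⊤ := by
  set P := Submodule.span K {v : A | ∃ i : ℤ, v = u i + u (i + 1)} with hP
  -- alternating functional
  let g : A →ₗ[K] K := u.constr K (fun i : ℤ => (-1 : K) ^ i)
  have hg : ∀ i : ℤ, g (u i) = (-1 : K) ^ i := fun i => u.constr_basis K _ i
  have hker : ∀ v ∈ ({v : A | ∃ i : ℤ, v = u i + u (i + 1)} : Set A), g v = 0 := by
    rintro v ⟨i, rfl⟩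
    rw [map_add, hg, hg, zpow_add₀ (by norm_num : (-1 : K) ≠ 0)]
    ring
  have hgP : ∀ v ∈ P, g v = 0 := by
    intro v hv
    induction hv using Submodule.span_induction with
    | mem x hx => exact hker x hx
    | zero => simp
    | add x y _ _ hx hy => rw [map_add, hx, hy, add_zero]
    | smul c x _ hx => rw [map_smul, hx, smul_zero]
  have h0 : u 0 ∉ P := by
    intro h
    have := hgP _ h
    rw [hg 0] at this
    norm_num at this
  refine ⟨h0, ?_⟩
  -- products lie in P
  have hprod : ∀ a b : A, a * b ∈ P := by
    have hspan : ∀ x : A, x ∈ Submodule.span K (Set.range u) := by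
      intro x; rw [u.span_eq]; trivial
    intro a b
    induction hspan a using Submodule.span_induction with
    | mem x hx =>
      obtain ⟨i, rfl⟩ := hx
      induction hspan b using Submodule.span_induction with
      | mem y hy =>
        obtain ⟨j, rfl⟩ := hy
        by_cases h : i = j
        · subst h
          rw [hmul]
          exact Submodule.subset_span ⟨i, rfl⟩
        · rw [hnat i j h]; exact P.zero_mem
      | zero => rw [mul_zero]; exact P.zero_mem
      | add y z _ _ hy hz => rw [mul_add]; exact P.add_mem hy hz
      | smul c y _ hy => rw [mul_smul_comm]; exact P.smul_mem c hy
    | zero => rw [zero_mul]; exact P.zero_mem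
    | add x y _ _ hx hy => rw [add_mul]; exact P.add_mem hx hy
    | smul c x _ hx => rw [smul_mul_assoc]; exact P.smul_mem c hx
  intro htop
  apply h0
  have hle : Submodule.span K {v : A | ∃ a b : A, v = a * b} ≤ P := by
    rw [Submodule.span_le]
    rintro v ⟨a, b, rfl⟩
    exact hprod a b
  exact hle (htop ▸ Submodule.mem_top)
end
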